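/- Let $J$ be nonnegative symmetric with the Lévy integrability condition, let $\Omega \subset \mathbb{R}^N$ be open and bounded with $\Lambda_1(\Omega) > 0$, let $c \in L^\infty(\Omega)$ with $\|c^+\|_{L^\infty(\Omega)} < \Lambda_1(\Omega)$, and $g \in L^2(\Omega)$. If $u \in \mathcal{V}^J(\Omega)$ is a variational supersolution of $Iu = c(x)u + g$ in $\Omega$ with $u \ge 0$ a.e. in $\mathbb{R}^N \setminus \Omega$, then $\|u^-\|_{L^2(\Omega)} \le \|g^-\|_{L^2(\Omega)}/(\Lambda_1(\Omega) - \|c^+\|_{L^\infty(\Omega)})$. In particular, if $g \ge 0$ in $\Omega$ then $u \ge 0$ a.e. in $\mathbb{R}^N$. -/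

import Mathlib

/-!
Test the supersolution inequality with `w = 1_Ω u⁻`. Since `u ≥ 0` off `Ω` we have `w = u⁻` a.e.,
and `t ↦ t⁻` is 1-Lipschitz, so `w ∈ 𝒟^J(Ω)`. The pointwise inequality
`(a - b)(a⁻ - b⁻) ≤ -(a⁻ - b⁻)²` gives `ℰ(u, w) ≤ -ℰ(w, w) ≤ -Λ ‖u⁻‖²`, while on `Ω`
`(c u + g) u⁻ ≥ -C₀ (u⁻)² - g⁻ u⁻`. Hence `(Λ - C₀) ‖u⁻‖² ≤ ∫ g⁻ u⁻ ≤ ‖g⁻‖ ‖u⁻‖`.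
-/

open MeasureTheory Set

noncomputable section

variable {N : ℕ}

/-- The signed bilinear form `ℰ_J(v,w) = ½ ∫∫ (v(x)-v(y))(w(x)-w(y)) J(x,y) dx dy`. -/
def bilinForm (J : EuclideanSpace ℝ (Fin N) → EuclideanSpace ℝ (Fin N) → ℝ)
    (v w : EuclideanSpace ℝ (Fin N) → ℝ) : ℝ :=
  (1 / 2) * ∫ p : EuclideanSpace ℝ (Fin N) × EuclideanSpace ℝ (Fin N),
    (v p.1 - v p.2) * (w p.1 - w p.2) * J p.1 p.2

/-- `v ∈ 𝒟^J(Ω)`: measurable, vanishing outside `Ω`, with finite energy. -/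
def memDJ (J : EuclideanSpace ℝ (Fin N) → EuclideanSpace ℝ (Fin N) → ℝ)
    (Ω : Set (EuclideanSpace ℝ (Fin N))) (v : EuclideanSpace ℝ (Fin N) → ℝ) : Prop :=
  Measurable v ∧ (∀ x ∉ Ω, v x = 0) ∧
    Integrable (fun p : EuclideanSpace ℝ (Fin N) × EuclideanSpace ℝ (Fin N) =>
      (v p.1 - v p.2) ^ 2 * J p.1 p.2)

theorem neg_min_zero_eq_negPart (a : ℝ) : -min a 0 = a⁻ := (negPart_eq_neg_inf_zero a).symm

theorem abs_negPart_sub_negPart_le (a b : ℝ) : |a⁻ - b⁻| ≤ |a - b| := by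
  have := abs_max_sub_max_le_abs (-a) (-b) 0
  rwa [neg_sub_neg, abs_sub_comm b] at this

theorem sub_mul_negPart_sub_le (a b : ℝ) : (a - b) * (a⁻ - b⁻) ≤ -(a⁻ - b⁻) ^ 2 := by
  rcases le_total 0 a with ha | ha <;> rcases le_total 0 b with hb | hb <;>
    simp only [negPart_eq_zero.2, negPart_eq_neg.2, *] <;> nlinarith

theorem neg_mul_sq_sub_le_mul_negPart {a c C g : ℝ} (hc : c ≤ C) :
    -(C * a⁻ ^ 2) - g⁻ * a⁻ ≤ (c * a + g) * a⁻ := by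
  have hg : -g⁻ ≤ g := by simpa using neg_le_neg (neg_le_negPart g)
  rcases le_total 0 a with ha | ha
  · simp [negPart_eq_zero.2 ha]
  · rw [negPart_eq_neg.2 ha]
    nlinarith

theorem rpow_half_le_div_of_mul_le {A B k : ℝ} (hA : 0 ≤ A) (hB : 0 ≤ B) (hk : 0 < k)
    (h : k * A ≤ A ^ (1 / 2 : ℝ) * B) : A ^ (1 / 2 : ℝ) ≤ B / k := by
  rw [← Real.sqrt_eq_rpow] at h ⊢
  rw [le_div_iff₀ hk]
  rcases (Real.sqrt_nonneg A).eq_or_lt with h0 | hpos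
  · simpa [← h0] using hB
  · have h' : k * (√A * √A) ≤ √A * B := by rwa [Real.mul_self_sqrt hA]
    exact le_of_mul_le_mul_left (by linarith) hpos

section Measure

variable {α : Type*} [MeasurableSpace α] {μ : Measure α}

theorem MeasureTheory.MemLp.negPart {f : α → ℝ} {p : ENNReal} (hf : MemLp f p μ) : MemLp f⁻ p μ :=
  hf.neg.sup MemLp.zero

-- The right-hand integral may be the junk value `0`; the bound survives because `f ≤ 0`.
theorem setIntegral_mono_of_nonpos {f h : α → ℝ} {s : Set α} (hs : MeasurableSet s)
    (hf : IntegrableOn f s μ) (hf0 : ∀ x ∈ s, f x ≤ 0) (hfh : ∀ x ∈ s, f x ≤ h x) :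
    ∫ x in s, f x ∂μ ≤ ∫ x in s, h x ∂μ := by
  by_cases hh : IntegrableOn h s μ
  · exact setIntegral_mono_on hf hh hs hfh
  · rw [integral_undef hh]
    exact setIntegral_nonpos hs hf0

theorem integral_mul_le_sqrt_mul_sqrt {f g : α → ℝ} (hf0 : 0 ≤ᵐ[μ] f) (hg0 : 0 ≤ᵐ[μ] g)
    (hf : MemLp f 2 μ) (hg : MemLp g 2 μ) :
    ∫ x, f x * g x ∂μ ≤ (∫ x, f x ^ 2 ∂μ) ^ (1 / 2 : ℝ) * (∫ x, g x ^ 2 ∂μ) ^ (1 / 2 : ℝ) := by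
  have h2 : ENNReal.ofReal 2 = 2 := by norm_num
  simpa only [Real.rpow_two] using
    integral_mul_le_Lp_mul_Lq_of_nonneg Real.HolderConjugate.two_two hf0 hg0 (h2 ▸ hf) (h2 ▸ hg)

theorem rpow_half_integral_sq_le_div_of_mul_le {f h : α → ℝ} {k : ℝ} (hf0 : 0 ≤ᵐ[μ] f)
    (hh0 : 0 ≤ᵐ[μ] h) (hf : MemLp f 2 μ) (hh : MemLp h 2 μ) (hk : 0 < k)
    (hfh : k * ∫ x, f x ^ 2 ∂μ ≤ ∫ x, h x * f x ∂μ) :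
    (∫ x, f x ^ 2 ∂μ) ^ (1 / 2 : ℝ) ≤ (∫ x, h x ^ 2 ∂μ) ^ (1 / 2 : ℝ) / k :=
  rpow_half_le_div_of_mul_le (integral_nonneg fun _ => sq_nonneg _)
    (Real.rpow_nonneg (integral_nonneg fun _ => sq_nonneg _) _) hk
    (hfh.trans ((integral_mul_le_sqrt_mul_sqrt hh0 hf0 hh hf).trans_eq (mul_comm _ _)))

theorem le_setIntegral_mul_negPart {c g u : α → ℝ} {s : Set α} {C : ℝ} (hs : MeasurableSet s)
    (hC : 0 ≤ C) (hc : ∀ x ∈ s, c x ≤ C)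
    (hu : MemLp u⁻ 2 (μ.restrict s)) (hg : MemLp g⁻ 2 (μ.restrict s)) :
    -(C * ∫ x in s, (u x)⁻ ^ 2 ∂μ) - ∫ x in s, (g x)⁻ * (u x)⁻ ∂μ
      ≤ ∫ x in s, (c x * u x + g x) * (u x)⁻ ∂μ := by
  have hint : IntegrableOn (fun x => -(C * (u x)⁻ ^ 2) - (g x)⁻ * (u x)⁻) s μ :=
    (hu.integrable_sq.const_mul C).neg.sub (hg.integrable_mul hu)
  calc -(C * ∫ x in s, (u x)⁻ ^ 2 ∂μ) - ∫ x in s, (g x)⁻ * (u x)⁻ ∂μ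
      = ∫ x in s, (-(C * (u x)⁻ ^ 2) - (g x)⁻ * (u x)⁻) ∂μ := by
        rw [integral_sub, integral_neg, integral_const_mul]
        exacts [(hu.integrable_sq.const_mul C).neg, hg.integrable_mul hu]
    _ ≤ _ := setIntegral_mono_of_nonpos hs hint
        (fun x _ => by nlinarith [negPart_nonneg (u x), negPart_nonneg (g x)])
        (fun x hx => neg_mul_sq_sub_le_mul_negPart (hc x hx))

theorem ae_nonneg_of_integral_negPart_sq_nonpos {u : α → ℝ} {s : Set α} (hs : MeasurableSet s)
    (hu : IntegrableOn (fun x => (u x)⁻ ^ 2) s μ) (h : ∫ x in s, (u x)⁻ ^ 2 ∂μ ≤ 0) :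
    ∀ᵐ x ∂μ, x ∈ s → 0 ≤ u x := by
  have hzero : (fun x => (u x)⁻ ^ 2) =ᵐ[μ.restrict s] 0 :=
    (integral_eq_zero_iff_of_nonneg (fun _ => sq_nonneg _) hu).1
      (le_antisymm h (integral_nonneg fun _ => sq_nonneg _))
  rw [← ae_restrict_iff' hs]
  filter_upwards [hzero] with x hx
  simpa using hx

theorem indicator_negPart_ae_eq {u : α → ℝ} {s : Set α} (hu : ∀ᵐ x ∂μ, x ∉ s → 0 ≤ u x) :
    s.indicator u⁻ =ᵐ[μ] u⁻ := by
  filter_upwards [hu] with x hx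
  by_cases hxs : x ∈ s
  · exact indicator_of_mem hxs _
  · rw [indicator_of_notMem hxs, Pi.negPart_apply, negPart_eq_zero.2 (hx hxs)]

theorem ae_prod_fst_and_snd {p : α → Prop} (h : ∀ᵐ x ∂μ, p x) :
    ∀ᵐ q ∂μ.prod μ, p q.1 ∧ p q.2 :=
  (Measure.quasiMeasurePreserving_fst.ae h).and (Measure.quasiMeasurePreserving_snd.ae h)

theorem IntegrableOn.union_swap_of_symm [SFinite μ] {E : Type*} [NormedAddCommGroup E]
    {f : α × α → E} (hf : ∀ q, f q.swap = f q) {s : Set α}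
    (h : IntegrableOn f (s ×ˢ univ) (μ.prod μ)) :
    IntegrableOn f (s ×ˢ univ ∪ univ ×ˢ s) (μ.prod μ) :=
  h.union (by simpa only [Function.comp_def, hf] using h.swap)

theorem integrable_sub_mul_sub_mul_kernel {u v w : α → ℝ} {J : α → α → ℝ} {s : Set α}
    (hs : MeasurableSet s) (hJ : ∀ x y, 0 ≤ J x y)
    (hmeas : AEStronglyMeasurable (fun q => (v q.1 - v q.2) * (w q.1 - w q.2) * J q.1 q.2)
      (μ.prod μ))
    (hu : IntegrableOn (fun q => (u q.1 - u q.2) ^ 2 * J q.1 q.2) (s ×ˢ univ ∪ univ ×ˢ s)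
      (μ.prod μ))
    (hv : ∀ᵐ q ∂μ.prod μ, |v q.1 - v q.2| ≤ |u q.1 - u q.2|)
    (hw : ∀ᵐ q ∂μ.prod μ, |w q.1 - w q.2| ≤ |u q.1 - u q.2|) (hw0 : ∀ x ∉ s, w x = 0) :
    Integrable (fun q => (v q.1 - v q.2) * (w q.1 - w q.2) * J q.1 q.2) (μ.prod μ) := by
  refine (hu.integrable_indicator ((hs.prod .univ).union (MeasurableSet.univ.prod hs))).mono'
    hmeas ?_
  filter_upwards [hv, hw] with q hvq hwq
  by_cases hq : q ∈ s ×ˢ univ ∪ univ ×ˢ s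
  · rw [indicator_of_mem hq, Real.norm_eq_abs, abs_mul, abs_mul, abs_of_nonneg (hJ _ _), ← sq_abs]
    exact mul_le_mul_of_nonneg_right
      ((sq |u q.1 - u q.2|).symm ▸ mul_le_mul hvq hwq (abs_nonneg _) (abs_nonneg _)) (hJ _ _)
  · simp only [mem_union, mem_prod, mem_univ, and_true, true_and, not_or] at hq
    simpa [hw0 _ hq.1, hw0 _ hq.2] using
      indicator_nonneg (fun q _ => mul_nonneg (sq_nonneg _) (hJ q.1 q.2)) q

end Measure

section NonlocalEnergy

variable {J : EuclideanSpace ℝ (Fin N) → EuclideanSpace ℝ (Fin N) → ℝ}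
  {u : EuclideanSpace ℝ (Fin N) → ℝ} {Ω : Set (EuclideanSpace ℝ (Fin N))}

theorem bilinForm_le_neg_bilinForm_of_ae_eq_negPart (hJ : ∀ x y, 0 ≤ J x y)
    {w : EuclideanSpace ℝ (Fin N) → ℝ} (hw : w =ᵐ[volume] u⁻)
    (huw : Integrable fun q : EuclideanSpace ℝ (Fin N) × EuclideanSpace ℝ (Fin N) =>
      (u q.1 - u q.2) * (w q.1 - w q.2) * J q.1 q.2)
    (hww : Integrable fun q : EuclideanSpace ℝ (Fin N) × EuclideanSpace ℝ (Fin N) =>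
      (w q.1 - w q.2) * (w q.1 - w q.2) * J q.1 q.2) :
    bilinForm J u w ≤ -bilinForm J w w := by
  have hsum : ∫ q : EuclideanSpace ℝ (Fin N) × EuclideanSpace ℝ (Fin N),
      ((u q.1 - u q.2) * (w q.1 - w q.2) * J q.1 q.2
      + (w q.1 - w q.2) * (w q.1 - w q.2) * J q.1 q.2) ≤ 0 := by
    refine integral_nonpos_of_ae ?_
    filter_upwards [ae_prod_fst_and_snd hw] with q ⟨h1, h2⟩
    rw [h1, h2, Pi.negPart_apply, Pi.negPart_apply, Pi.zero_apply]
    nlinarith [mul_le_mul_of_nonneg_right (sub_mul_negPart_sub_le (u q.1) (u q.2)) (hJ q.1 q.2)]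
  rw [integral_add huw hww] at hsum
  unfold bilinForm
  linarith

theorem memDJ_indicator_negPart_and_bilinForm_le (hJ : ∀ x y, 0 ≤ J x y)
    (hJsym : ∀ x y, J x y = J y x)
    (hJmeas : Measurable fun q : EuclideanSpace ℝ (Fin N) × EuclideanSpace ℝ (Fin N) => J q.1 q.2)
    (hΩ : MeasurableSet Ω) (hu : Measurable u)
    (huρ : IntegrableOn (fun q => (u q.1 - u q.2) ^ 2 * J q.1 q.2) (Ω ×ˢ univ))
    (hu0 : ∀ᵐ x, x ∉ Ω → 0 ≤ u x) :
    memDJ J Ω (Ω.indicator u⁻) ∧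
      bilinForm J u (Ω.indicator u⁻) ≤ -bilinForm J (Ω.indicator u⁻) (Ω.indicator u⁻) := by
  set w := Ω.indicator u⁻
  have hwae : w =ᵐ[volume] u⁻ := indicator_negPart_ae_eq hu0
  have hwmeas : Measurable w := (hu.neg.max measurable_const).indicator hΩ
  have hw0 : ∀ x ∉ Ω, w x = 0 := fun x hx => indicator_of_notMem hx _
  have hincr : ∀ᵐ q ∂(volume.prod volume), |w q.1 - w q.2| ≤ |u q.1 - u q.2| := by
    filter_upwards [ae_prod_fst_and_snd hwae] with q ⟨h1, h2⟩
    rw [h1, h2]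
    exact abs_negPart_sub_negPart_le _ _
  have hρ := IntegrableOn.union_swap_of_symm (μ := volume)
    (fun q => by simp only [Prod.fst_swap, Prod.snd_swap, hJsym q.2]; ring) huρ
  have hdiff {v : EuclideanSpace ℝ (Fin N) → ℝ} (hv : Measurable v) :
      Measurable fun q : EuclideanSpace ℝ (Fin N) × EuclideanSpace ℝ (Fin N) => v q.1 - v q.2 :=
    (hv.comp measurable_fst).sub (hv.comp measurable_snd)
  have hww := integrable_sub_mul_sub_mul_kernel hΩ hJ
    (((hdiff hwmeas).mul (hdiff hwmeas)).mul hJmeas).aestronglyMeasurable hρ hincr hincr hw0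
  have huw := integrable_sub_mul_sub_mul_kernel hΩ hJ
    (((hdiff hu).mul (hdiff hwmeas)).mul hJmeas).aestronglyMeasurable hρ
    (ae_of_all _ fun _ => le_rfl) hincr hw0
  exact ⟨⟨hwmeas, hw0, by simp only [sq]; exact hww⟩,
    bilinForm_le_neg_bilinForm_of_ae_eq_negPart hJ hwae huw hww⟩

end NonlocalEnergy

theorem weak_maximum_principle_general
    (J : EuclideanSpace ℝ (Fin N) → EuclideanSpace ℝ (Fin N) → ℝ)
    (hJpos : ∀ x y, 0 ≤ J x y) (hJsym : ∀ x y, J x y = J y x)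
    (hJmeas : Measurable fun p : EuclideanSpace ℝ (Fin N) × EuclideanSpace ℝ (Fin N) => J p.1 p.2)
    (Ω : Set (EuclideanSpace ℝ (Fin N))) (hΩ : IsOpen Ω) (hΩb : Bornology.IsBounded Ω)
    -- `Λ` is a positive lower bound for the first Dirichlet eigenvalue `Λ₁(Ω)`:
    (Λ : ℝ)
    (hΛ : ∀ v, memDJ J Ω v → Λ * ∫ x in Ω, (v x) ^ 2 ≤ bilinForm J v v)
    -- `c ∈ L^∞(Ω)` with `‖c⁺‖_{L^∞(Ω)} ≤ C₀ < Λ`: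
    (c : EuclideanSpace ℝ (Fin N) → ℝ)
    (C₀ : ℝ) (hC₀ : 0 ≤ C₀) (hcC₀ : ∀ x ∈ Ω, max (c x) 0 ≤ C₀) (hC₀Λ : C₀ < Λ)
    -- `g ∈ L²(Ω)`:
    (g : EuclideanSpace ℝ (Fin N) → ℝ) (hg : Measurable g)
    (hgL2 : IntegrableOn (fun x => (g x) ^ 2) Ω)
    -- `u ∈ 𝒱^J(Ω) ∩ L²_loc`:
    (u : EuclideanSpace ℝ (Fin N) → ℝ) (hu : Measurable u)
    (huρ : IntegrableOn
      (fun p : EuclideanSpace ℝ (Fin N) × EuclideanSpace ℝ (Fin N) =>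
        (u p.1 - u p.2) ^ 2 * J p.1 p.2) (Ω ×ˢ univ))
    (huL2 : LocallyIntegrable fun x => (u x) ^ 2)
    -- `u` is a variational supersolution of `Iu = c(x)u + g` in `Ω`:
    (hsuper : ∀ v, memDJ J Ω v → (∀ x, 0 ≤ v x) →
      Bornology.IsBounded (Function.support v) →
      (∫ x in Ω, (c x * u x + g x) * v x) ≤ bilinForm J u v)
    -- `u ≥ 0` a.e. in `ℝ^N ∖ Ω`:
    (hu0 : ∀ᵐ x, x ∉ Ω → 0 ≤ u x) :
    (∫ x in Ω, (-min (u x) 0) ^ 2) ^ (1 / 2 : ℝ)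
        ≤ (∫ x in Ω, (-min (g x) 0) ^ 2) ^ (1 / 2 : ℝ) / (Λ - C₀) ∧
    ((∀ x ∈ Ω, 0 ≤ g x) → ∀ᵐ x, 0 ≤ u x) := by
  have hΩm : MeasurableSet Ω := hΩ.measurableSet
  obtain ⟨hwDJ, henergy⟩ :=
    memDJ_indicator_negPart_and_bilinForm_le hJpos hJsym hJmeas hΩm hu huρ hu0
  have hu2 : MemLp u⁻ 2 (volume.restrict Ω) :=
    ((memLp_two_iff_integrable_sq hu.aestronglyMeasurable).2
      ((huL2.integrableOn_isCompact hΩb.isCompact_closure).mono_set subset_closure)).negPart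
  have hg2 : MemLp g⁻ 2 (volume.restrict Ω) :=
    ((memLp_two_iff_integrable_sq hg.aestronglyMeasurable).2 hgL2).negPart
  have hwΩ : ∀ x ∈ Ω, Ω.indicator u⁻ x = (u x)⁻ := fun x hx => indicator_of_mem hx _
  have hsup : ∫ x in Ω, (c x * u x + g x) * (u x)⁻ ≤ bilinForm J u (Ω.indicator u⁻) :=
    (setIntegral_congr_fun hΩm fun x hx => by rw [hwΩ x hx]).symm.trans_le
      (hsuper _ hwDJ (indicator_nonneg fun x _ => negPart_nonneg (u x))
        (hΩb.subset support_indicator_subset))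
  have hΛw : Λ * ∫ x in Ω, (u x)⁻ ^ 2 ≤ bilinForm J (Ω.indicator u⁻) (Ω.indicator u⁻) :=
    (congrArg (Λ * ·) (setIntegral_congr_fun hΩm fun x hx => by rw [hwΩ x hx])).symm.trans_le
      (hΛ _ hwDJ)
  have hforce := le_setIntegral_mul_negPart hΩm hC₀
    (fun x hx => (le_max_left _ _).trans (hcC₀ x hx)) hu2 hg2
  have hL2 : (∫ x in Ω, (u x)⁻ ^ 2) ^ (1 / 2 : ℝ)
      ≤ (∫ x in Ω, (g x)⁻ ^ 2) ^ (1 / 2 : ℝ) / (Λ - C₀) :=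
    rpow_half_integral_sq_le_div_of_mul_le (ae_of_all _ fun x => negPart_nonneg (u x))
      (ae_of_all _ fun x => negPart_nonneg (g x)) hu2 hg2 (sub_pos.2 hC₀Λ) (by linarith)
  simp only [neg_min_zero_eq_negPart]
  refine ⟨hL2, fun hg0 => ?_⟩
  have hB : ∫ x in Ω, (g x)⁻ ^ 2 = 0 :=
    setIntegral_eq_zero_of_forall_eq_zero fun x hx => by simp [negPart_eq_zero.2 (hg0 x hx)]
  have hA : ∫ x in Ω, (u x)⁻ ^ 2 ≤ 0 := by
    rw [hB, Real.zero_rpow one_half_pos.ne', zero_div, ← Real.sqrt_eq_rpow] at hL2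
    exact Real.sqrt_eq_zero'.1 (hL2.antisymm (Real.sqrt_nonneg _))
  filter_upwards [ae_nonneg_of_integral_negPart_sq_nonpos hΩm hu2.integrable_sq hA, hu0]
    with x hxΩ hxΩc
  by_cases hx : x ∈ Ω
  exacts [hxΩ hx, hxΩc hx]

/-- Proposition (weak maximum principle): if `Λ ≤ Λ₁(Ω)` with `0 < Λ`,
`‖c⁺‖_{L^∞(Ω)} ≤ C₀ < Λ`, `g ∈ L²(Ω)`, and `u ∈ 𝒱^J(Ω)` is a variational
supersolution of `Iu = c(x)u + g` in `Ω` with `u ≥ 0` a.e. in `ℝ^N ∖ Ω`, then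
`‖u⁻‖_{L²(Ω)} ≤ ‖g⁻‖_{L²(Ω)}/(Λ - C₀)`; in particular, `g ≥ 0` in `Ω`
implies `u ≥ 0` a.e. in `ℝ^N`. -/
theorem weak_maximum_principle
    (J : EuclideanSpace ℝ (Fin N) → EuclideanSpace ℝ (Fin N) → ℝ)
    (hJpos : ∀ x y, 0 ≤ J x y) (hJsym : ∀ x y, J x y = J y x)
    (hJmeas : Measurable fun p : EuclideanSpace ℝ (Fin N) × EuclideanSpace ℝ (Fin N) => J p.1 p.2)
    (CJ : ℝ)
    (hCJ : ∀ x, (∫⁻ y, ENNReal.ofReal (min 1 (dist x y ^ 2) * J x y)) ≤ ENNReal.ofReal CJ)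
    (Ω : Set (EuclideanSpace ℝ (Fin N))) (hΩ : IsOpen Ω) (hΩb : Bornology.IsBounded Ω)
    -- `Λ` is a positive lower bound for the first Dirichlet eigenvalue `Λ₁(Ω)`:
    (Λ : ℝ) (hΛpos : 0 < Λ)
    (hΛ : ∀ v, memDJ J Ω v → Λ * ∫ x in Ω, (v x) ^ 2 ≤ bilinForm J v v)
    -- `c ∈ L^∞(Ω)` with `‖c⁺‖_{L^∞(Ω)} ≤ C₀ < Λ`:
    (c : EuclideanSpace ℝ (Fin N) → ℝ) (hc : Measurable c)
    (C₀ : ℝ) (hC₀ : 0 ≤ C₀) (hcC₀ : ∀ x ∈ Ω, max (c x) 0 ≤ C₀) (hC₀Λ : C₀ < Λ)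
    -- `g ∈ L²(Ω)`:
    (g : EuclideanSpace ℝ (Fin N) → ℝ) (hg : Measurable g)
    (hgL2 : IntegrableOn (fun x => (g x) ^ 2) Ω)
    -- `u ∈ 𝒱^J(Ω) ∩ L²_loc`:
    (u : EuclideanSpace ℝ (Fin N) → ℝ) (hu : Measurable u)
    (huρ : IntegrableOn
      (fun p : EuclideanSpace ℝ (Fin N) × EuclideanSpace ℝ (Fin N) =>
        (u p.1 - u p.2) ^ 2 * J p.1 p.2) (Ω ×ˢ univ))
    (huL2 : LocallyIntegrable fun x => (u x) ^ 2)
    -- `u` is a variational supersolution of `Iu = c(x)u + g` in `Ω`: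
    (hsuper : ∀ v, memDJ J Ω v → (∀ x, 0 ≤ v x) →
      Bornology.IsBounded (Function.support v) →
      (∫ x in Ω, (c x * u x + g x) * v x) ≤ bilinForm J u v)
    -- `u ≥ 0` a.e. in `ℝ^N ∖ Ω`:
    (hu0 : ∀ᵐ x, x ∉ Ω → 0 ≤ u x) :
    (∫ x in Ω, (-min (u x) 0) ^ 2) ^ (1 / 2 : ℝ)
        ≤ (∫ x in Ω, (-min (g x) 0) ^ 2) ^ (1 / 2 : ℝ) / (Λ - C₀) ∧
    ((∀ x ∈ Ω, 0 ≤ g x) → ∀ᵐ x, 0 ≤ u x) :=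
  weak_maximum_principle_general J hJpos hJsym hJmeas Ω hΩ hΩb Λ hΛ c C₀ hC₀ hcC₀ hC₀Λ g hg hgL2 u
    hu huρ huL2 hsuper hu0
end
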